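/- arXiv:1903.10613 — 6 statements merged into one kernel-verified Lean document; each statement's English description precedes it below -/
import Mathlib

section
/- For all m, n ∈ ℕ, h_2(mn) ≥ h_2(m) + h_2(n). -/
/-- The cyclic shift operator on `𝔽₂ⁿ` (indexed by `ZMod n`): `(cshift x) i = x (i - 1)`. -/
def cshift {n : ℕ} (x : ZMod n → ZMod 2) : ZMod n → ZMod 2 := fun i => x (i - 1)

/-- A subspace `U ≤ 𝔽₂ⁿ` is cyclically covering if every vector of `𝔽₂ⁿ` has a cyclic
shift lying in `U`, i.e. `⋃ᵢ σⁱ(U) = 𝔽₂ⁿ`. -/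
def CyclicallyCovering {n : ℕ} (U : Submodule (ZMod 2) (ZMod n → ZMod 2)) : Prop :=
  ∀ x : ZMod n → ZMod 2, ∃ k : ℕ, cshift^[k] x ∈ U

/-- `h2 n` is the largest possible codimension of a cyclically covering subspace of `𝔽₂ⁿ`. -/
noncomputable def h2 (n : ℕ) : ℕ :=
  sSup {d : ℕ | ∃ U : Submodule (ZMod 2) (ZMod n → ZMod 2),
    CyclicallyCovering U ∧
    Module.finrank (ZMod 2) (ZMod n → ZMod 2) - Module.finrank (ZMod 2) U = d}

/-!
Given cyclically covering `U ≤ 𝔽₂^m` and `V ≤ 𝔽₂^n`, let `W ≤ 𝔽₂^{mn}` consist of the `x` whose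
sums over the residue classes mod `m` lie in `U` and whose restriction to the multiples of `m` lies
in `V`. The class sums commute with every shift and are unchanged by shifts by multiples of `m`,
while restriction turns a shift by `m l` into a shift by `l`: shifting first to put the class sums
into `U` and then by a multiple of `m` to put the restriction into `V` shows that `W` is
cyclically covering. The all-ones vector lies in every cyclically covering subspace, and it absorbs
the only relation between class sums and restriction (the class sum at `0` is the total of the
restriction), so `x ↦ (class sums mod U, restriction mod V)` is onto and
`codim W = codim U + codim V`.
-/

open Module Function

section FiberSum

variable {α β ι K M : Type*} [Fintype α] [DecidableEq β] [Semiring K] [AddCommMonoid M]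
  [Module K M]

variable (K) in
def fiberSum (π : α → β) : (α → M) →ₗ[K] (β → M) where
  toFun x b := ∑ a with π a = b, x a
  map_add' x y := by ext b; simp [Finset.sum_add_distrib]
  map_smul' c x := by ext b; simp [Finset.smul_sum]

theorem fiberSum_apply (π : α → β) (x : α → M) (b : β) :
    fiberSum K π x b = ∑ a with π a = b, x a := rfl

theorem fiberSum_comp_equiv (π : α → β) (g : α ≃ α) (h : β ≃ β) (hπ : ∀ a, π (g a) = h (π a))
    (x : α → M) : fiberSum K π (x ∘ g) = fiberSum K π x ∘ h := by
  ext b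
  refine Finset.sum_equiv g (fun a => ?_) fun _ _ => rfl
  simp [hπ]

theorem fiberSum_id [DecidableEq α] (x : α → M) : fiberSum K id x = x := by
  ext b
  simp [fiberSum_apply, Finset.filter_eq']

theorem fiberSum_const [DecidableEq α] (b₀ : β) (x : α → M) :
    fiberSum K (fun _ => b₀) x = Pi.single b₀ (∑ a, x a) := by
  ext b
  rcases eq_or_ne b b₀ with rfl | hb
  · simp [fiberSum_apply]
  · simp [fiberSum_apply, hb, Ne.symm hb]

theorem fiberSum_extend_zero [Fintype ι] (π : α → β) {f : ι → α} (hf : Injective f)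
    (g : ι → M) : fiberSum K π (extend f g 0) = fiberSum K (π ∘ f) g := by
  classical
  ext b
  rw [fiberSum_apply, fiberSum_apply]
  symm
  refine Finset.sum_bij_ne_zero (fun i _ _ => f i) (fun i hi _ => by simpa using hi)
    (fun i _ _ j _ _ h => hf h) (fun a ha hne => ?_) (fun i _ _ => (hf.extend_apply g 0 i).symm)
  by_cases h : ∃ i, f i = a
  · obtain ⟨i, rfl⟩ := h
    rw [hf.extend_apply] at hne
    exact ⟨i, by simpa using ha, hne, rfl⟩
  · exact absurd (extend_apply' g (0 : α → M) a h) hne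

end FiberSum

section ScaleHom

variable (m n : ℕ)

def modHom : ZMod (m * n) →+* ZMod m := ZMod.castHom (dvd_mul_right m n) (ZMod m)

def scaleHom : ZMod n →+ ZMod (m * n) :=
  ZMod.lift n ⟨(AddMonoidHom.mulRight (m : ZMod (m * n))).comp (Int.castAddHom _), by
    simp [mul_comm (n : ZMod (m * n)), ← Nat.cast_mul]⟩

variable {m n}

theorem scaleHom_natCast (k : ℕ) : scaleHom m n k = ((m * k : ℕ) : ZMod (m * n)) := by
  rw [scaleHom, ← Int.cast_natCast (R := ZMod n) k, ZMod.lift_coe]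
  simp [mul_comm]

theorem modHom_scaleHom (j : ZMod n) : modHom m n (scaleHom m n j) = 0 := by
  rw [← ZMod.intCast_zmod_cast j, scaleHom, ZMod.lift_coe]
  simp [modHom]

theorem modHom_natCast_val [NeZero m] (r : ZMod m) : modHom m n (r.val : ZMod (m * n)) = r := by
  rw [modHom, map_natCast, ZMod.natCast_zmod_val]

theorem scaleHom_injective [NeZero m] [NeZero n] : Injective (scaleHom m n) := by
  refine (injective_iff_map_eq_zero _).2 fun j hj => ?_
  rw [← ZMod.natCast_zmod_val j, scaleHom_natCast, ZMod.natCast_eq_zero_iff] at hj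
  rw [← ZMod.natCast_zmod_val j, ZMod.natCast_eq_zero_iff]
  exact Nat.dvd_of_mul_dvd_mul_left (Nat.pos_of_ne_zero (NeZero.ne m)) hj

end ScaleHom

theorem exists_fiberSum_modHom_eq_and_funLeft_scaleHom_eq {m n : ℕ} [NeZero m] [NeZero n]
    {K : Type*} [Ring K] (a : ZMod m → K) (b : ZMod n → K) (hab : a 0 = ∑ j, b j) :
    ∃ x, fiberSum K (modHom m n) x = a ∧ LinearMap.funLeft K K (scaleHom m n) x = b := by
  set s : ZMod m → ZMod (m * n) := fun r => (r.val : ZMod (m * n))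
  have hs : modHom m n ∘ s = id := funext modHom_natCast_val
  have hs_inj : Injective s := LeftInverse.injective (g := modHom m n) modHom_natCast_val
  set a' := a - Pi.single 0 (∑ j, b j)
  have ha' : a' 0 = 0 := by simp [a', hab]
  -- `b` on the multiples of `m`, and `a'` on the representatives `0, …, m - 1`
  refine ⟨extend (scaleHom m n) b 0 + extend s a' 0, ?_, ?_⟩
  · have hmul : modHom m n ∘ scaleHom m n = fun _ => 0 := funext modHom_scaleHom
    rw [map_add, fiberSum_extend_zero _ scaleHom_injective, fiberSum_extend_zero _ hs_inj, hs,
      fiberSum_id, hmul, fiberSum_const]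
    simp [a']
  · ext j
    simp only [LinearMap.funLeft_apply, Pi.add_apply, scaleHom_injective.extend_apply]
    by_cases hj : ∃ r, s r = scaleHom m n j
    · obtain ⟨r, hr⟩ := hj
      have hr0 : r = 0 := by
        simpa [s, modHom_scaleHom, modHom_natCast_val] using congrArg (modHom m n) hr
      rw [← hr, hs_inj.extend_apply, hr0, ha', add_zero]
    · rw [extend_apply' _ _ _ hj, Pi.zero_apply, add_zero]

theorem cshift_iterate {N : ℕ} (k : ℕ) (x : ZMod N → ZMod 2) :
    cshift^[k] x = x ∘ Equiv.subRight (k : ZMod N) := by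
  induction k with
  | zero => ext; simp
  | succ k ih =>
    ext i
    rw [iterate_succ_apply', cshift, ih]
    simp [sub_sub, add_comm]

theorem cshift_iterate_mul_self {m : ℕ} (l : ℕ) (w : ZMod m → ZMod 2) :
    cshift^[m * l] w = w := by
  ext r
  simp [cshift_iterate]

theorem fiberSum_modHom_cshift_iterate {m n : ℕ} [NeZero (m * n)] (k : ℕ)
    (x : ZMod (m * n) → ZMod 2) :
    fiberSum (ZMod 2) (modHom m n) (cshift^[k] x) =
      cshift^[k] (fiberSum (ZMod 2) (modHom m n) x) := by
  rw [cshift_iterate, cshift_iterate]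
  exact fiberSum_comp_equiv _ _ _ (fun i => by simp) x

theorem funLeft_scaleHom_cshift_iterate_mul {m n : ℕ} (l : ℕ) (x : ZMod (m * n) → ZMod 2) :
    LinearMap.funLeft (ZMod 2) (ZMod 2) (scaleHom m n) (cshift^[m * l] x) =
      cshift^[l] (LinearMap.funLeft (ZMod 2) (ZMod 2) (scaleHom m n) x) := by
  ext j
  simp [cshift_iterate, LinearMap.funLeft_apply, scaleHom_natCast]

theorem CyclicallyCovering.one_mem {N : ℕ} {U : Submodule (ZMod 2) (ZMod N → ZMod 2)}
    (hU : CyclicallyCovering U) : 1 ∈ U := by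
  obtain ⟨k, hk⟩ := hU 1
  rwa [cshift_iterate, Pi.one_comp] at hk

theorem CyclicallyCovering.comap_fiberSum_inf_comap_funLeft {m n : ℕ} [NeZero (m * n)]
    {U : Submodule (ZMod 2) (ZMod m → ZMod 2)} {V : Submodule (ZMod 2) (ZMod n → ZMod 2)}
    (hU : CyclicallyCovering U) (hV : CyclicallyCovering V) :
    CyclicallyCovering (U.comap (fiberSum (ZMod 2) (modHom m n)) ⊓
      V.comap (LinearMap.funLeft (ZMod 2) (ZMod 2) (scaleHom m n))) := by
  intro x
  obtain ⟨k, hk⟩ := hU (fiberSum (ZMod 2) (modHom m n) x)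
  obtain ⟨l, hl⟩ := hV (LinearMap.funLeft (ZMod 2) (ZMod 2) (scaleHom m n) (cshift^[k] x))
  refine ⟨m * l + k, ?_, ?_⟩ <;>
    simp only [SetLike.mem_coe, Submodule.mem_comap, iterate_add_apply]
  · rwa [fiberSum_modHom_cshift_iterate, cshift_iterate_mul_self, fiberSum_modHom_cshift_iterate]
  · rwa [funLeft_scaleHom_cshift_iterate_mul]

theorem finrank_quotient_comap_inf_comap {K E F G : Type*} [Field K] [AddCommGroup E]
    [Module K E] [AddCommGroup F] [Module K F] [FiniteDimensional K F] [AddCommGroup G]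
    [Module K G] [FiniteDimensional K G] (f : E →ₗ[K] F) (g : E →ₗ[K] G) (U : Submodule K F)
    (V : Submodule K G) (h : Surjective ((U.mkQ ∘ₗ f).prod (V.mkQ ∘ₗ g))) :
    finrank K (E ⧸ (U.comap f ⊓ V.comap g)) = finrank K (F ⧸ U) + finrank K (G ⧸ V) := by
  have hker : U.comap f ⊓ V.comap g = LinearMap.ker ((U.mkQ ∘ₗ f).prod (V.mkQ ∘ₗ g)) := by
    rw [LinearMap.ker_prod, LinearMap.ker_comp, LinearMap.ker_comp, Submodule.ker_mkQ,
      Submodule.ker_mkQ]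
  rw [hker, (LinearMap.quotKerEquivOfSurjective _ h).finrank_eq, Module.finrank_prod]

theorem surjective_mkQ_fiberSum_prod_mkQ_funLeft {m n : ℕ} [NeZero m] [NeZero n] {K : Type*}
    [Ring K] {U : Submodule K (ZMod m → K)} (hU : 1 ∈ U) (V : Submodule K (ZMod n → K)) :
    Surjective ((U.mkQ ∘ₗ fiberSum K (modHom m n)).prod
      (V.mkQ ∘ₗ LinearMap.funLeft K K (scaleHom m n))) := by
  rintro ⟨a, b⟩
  obtain ⟨a, rfl⟩ := U.mkQ_surjective a
  obtain ⟨b, rfl⟩ := V.mkQ_surjective b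
  obtain ⟨x, hxa, hxb⟩ :=
    exists_fiberSum_modHom_eq_and_funLeft_scaleHom_eq (a + (∑ j, b j - a 0) • 1) b (by simp)
  refine ⟨x, Prod.ext ?_ ?_⟩
  · simp [hxa, (Submodule.Quotient.mk_eq_zero U).2 hU]
  · simp [hxb]

theorem bddAbove_codim_cyclicallyCovering (N : ℕ) :
    BddAbove {d : ℕ | ∃ U : Submodule (ZMod 2) (ZMod N → ZMod 2), CyclicallyCovering U ∧
      finrank (ZMod 2) (ZMod N → ZMod 2) - finrank (ZMod 2) U = d} := by
  refine ⟨finrank (ZMod 2) (ZMod N → ZMod 2), ?_⟩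
  rintro d ⟨U, -, rfl⟩
  exact Nat.sub_le _ _

theorem CyclicallyCovering.finrank_quotient_le_h2 {N : ℕ} [NeZero N]
    {U : Submodule (ZMod 2) (ZMod N → ZMod 2)} (hU : CyclicallyCovering U) :
    finrank (ZMod 2) ((ZMod N → ZMod 2) ⧸ U) ≤ h2 N := by
  rw [Submodule.finrank_quotient]
  exact le_csSup (bddAbove_codim_cyclicallyCovering N) ⟨U, hU, rfl⟩

theorem exists_cyclicallyCovering_finrank_quotient_eq_h2 (N : ℕ) [NeZero N] :
    ∃ U : Submodule (ZMod 2) (ZMod N → ZMod 2), CyclicallyCovering U ∧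
      finrank (ZMod 2) ((ZMod N → ZMod 2) ⧸ U) = h2 N := by
  have htop : CyclicallyCovering (⊤ : Submodule (ZMod 2) (ZMod N → ZMod 2)) :=
    fun _ => ⟨0, Submodule.mem_top⟩
  obtain ⟨U, hU, hd⟩ :=
    Nat.sSup_mem (by exact ⟨_, ⊤, htop, rfl⟩) (bddAbove_codim_cyclicallyCovering N)
  exact ⟨U, hU, by rw [Submodule.finrank_quotient, hd, h2]⟩

/-- For all positive integers `m, n`, `h₂(mn) ≥ h₂(m) + h₂(n)`. -/
theorem h2_mul_ge_add (m n : ℕ) (hm : 0 < m) (hn : 0 < n) :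
    h2 m + h2 n ≤ h2 (m * n) := by
  have : NeZero m := ⟨hm.ne'⟩
  have : NeZero n := ⟨hn.ne'⟩
  obtain ⟨U, hU, hUd⟩ := exists_cyclicallyCovering_finrank_quotient_eq_h2 m
  obtain ⟨V, hV, hVd⟩ := exists_cyclicallyCovering_finrank_quotient_eq_h2 n
  rw [← hUd, ← hVd, ← finrank_quotient_comap_inf_comap _ _ U V
    (surjective_mkQ_fiberSum_prod_mkQ_funLeft hU.one_mem V)]
  exact (hU.comap_fiberSum_inf_comap_funLeft hV).finrank_quotient_le_h2
end

section
/- For all n ∈ ℕ, h_2(2n) ≤ 2·h_2(n). -/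
/-
Fold a cyclically covering `U ≤ 𝔽₂^{2n}` down to `𝔽₂ⁿ` in two ways: pull it back along the
periodic extension `φ y = y ∘ (· mod n)` and push it forward along the folding map
`ψ x = (x i + x (i + n))ᵢ`. Both maps commute with the cyclic shift and `ψ` is onto, so
`U.comap φ` and `U.map ψ` are again cyclically covering. Since `φ` is injective and `ψ ∘ φ = 0`,
`dim U.comap φ + dim U.map ψ ≤ dim U`, i.e. the codimension of `U` is at most the sum of theirs.
-/

open Module

theorem finrank_comap_add_finrank_map_le {K E F G : Type*} [DivisionRing K]
    [AddCommGroup E] [Module K E] [AddCommGroup F] [Module K F] [AddCommGroup G] [Module K G]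
    [FiniteDimensional K F] {φ : E →ₗ[K] F} {ψ : F →ₗ[K] G} (hφ : Function.Injective φ)
    (hψφ : ψ ∘ₗ φ = 0) (U : Submodule K F) :
    finrank K (U.comap φ) + finrank K (U.map ψ) ≤ finrank K U := by
  let f := ψ ∘ₗ U.subtype
  let g : U.comap φ →ₗ[K] LinearMap.ker f :=
    LinearMap.codRestrict _ (φ.restrict fun _ hx => hx) fun v => by
      simp [f, ← LinearMap.comp_apply, hψφ]
  have hg : Function.Injective g := fun a b hab =>
    Subtype.ext (hφ (congrArg (fun z : LinearMap.ker f => ((z : U) : F)) hab))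
  calc finrank K (U.comap φ) + finrank K (U.map ψ)
      ≤ finrank K (LinearMap.ker f) + finrank K (LinearMap.range f) := by
        rw [LinearMap.range_comp, Submodule.range_subtype]
        exact Nat.add_le_add_right (LinearMap.finrank_le_finrank_of_injective hg) _
    _ = finrank K U := by rw [add_comm, LinearMap.finrank_range_add_finrank_ker]

theorem finrank_zmod_fun (n : ℕ) [NeZero n] : finrank (ZMod 2) (ZMod n → ZMod 2) = n := by
  rw [finrank_fintype_fun_eq_card, ZMod.card]

namespace CyclicallyCovering

variable {m n : ℕ} {f : (ZMod m → ZMod 2) →ₗ[ZMod 2] (ZMod n → ZMod 2)}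

theorem codim_le_h2 {U : Submodule (ZMod 2) (ZMod n → ZMod 2)} (hU : CyclicallyCovering U) :
    finrank (ZMod 2) (ZMod n → ZMod 2) - finrank (ZMod 2) U ≤ h2 n :=
  le_csSup ⟨_, by rintro _ ⟨_, _, rfl⟩; exact Nat.sub_le _ _⟩ ⟨U, hU, rfl⟩

theorem comap (hf : Function.Semiconj f (@cshift m) (@cshift n))
    {U : Submodule (ZMod 2) (ZMod n → ZMod 2)} (hU : CyclicallyCovering U) :
    CyclicallyCovering (U.comap f) := by
  intro y
  obtain ⟨k, hk⟩ := hU (f y)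
  exact ⟨k, by rwa [Submodule.mem_comap, (hf.iterate_right k).eq]⟩

theorem map (hf : Function.Semiconj f (@cshift m) (@cshift n)) (hf' : Function.Surjective f)
    {U : Submodule (ZMod 2) (ZMod m → ZMod 2)} (hU : CyclicallyCovering U) :
    CyclicallyCovering (U.map f) := by
  intro y
  obtain ⟨x, rfl⟩ := hf' y
  obtain ⟨k, hk⟩ := hU x
  exact ⟨k, (hf.iterate_right k).eq x ▸ Submodule.mem_map_of_mem hk⟩

end CyclicallyCovering

section Fold

variable (n : ℕ)

abbrev castHalf : ZMod (2 * n) →+* ZMod n := ZMod.castHom (dvd_mul_left n 2) (ZMod n)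

abbrev periodicExt : (ZMod n → ZMod 2) →ₗ[ZMod 2] (ZMod (2 * n) → ZMod 2) :=
  LinearMap.funLeft (ZMod 2) (ZMod 2) (castHalf n)

def fold : (ZMod (2 * n) → ZMod 2) →ₗ[ZMod 2] (ZMod n → ZMod 2) :=
  LinearMap.funLeft (ZMod 2) (ZMod 2) (fun i : ZMod n => (i.val : ZMod (2 * n))) +
    LinearMap.funLeft (ZMod 2) (ZMod 2) (fun i : ZMod n => (i.val : ZMod (2 * n)) + n)

theorem periodicExt_injective : Function.Injective (periodicExt n) :=
  LinearMap.funLeft_injective_of_surjective _ _ _ (ZMod.castHom_surjective _)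

theorem semiconj_periodicExt_cshift : Function.Semiconj (periodicExt n) cshift cshift := by
  intro y
  funext j
  simp [cshift, LinearMap.funLeft_apply]

variable [NeZero n]

theorem castHalf_val_cast (i : ZMod n) : castHalf n (i.val : ZMod (2 * n)) = i := by
  rw [map_natCast, ZMod.natCast_zmod_val]

theorem eq_val_castHalf_or_eq_add (j : ZMod (2 * n)) :
    j = ((castHalf n j).val : ZMod (2 * n)) ∨ j = ((castHalf n j).val : ZMod (2 * n)) + n := by
  rw [ZMod.castHom_apply, ZMod.cast_eq_val, ZMod.val_natCast]
  rcases lt_or_ge j.val n with h | h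
  · left
    rw [Nat.mod_eq_of_lt h, ZMod.natCast_zmod_val]
  · right
    rw [Nat.mod_eq_sub_mod h, Nat.mod_eq_of_lt (by have := ZMod.val_lt j; omega), ← Nat.cast_add,
      Nat.sub_add_cancel h, ZMod.natCast_zmod_val]

theorem fold_apply_castHalf (x : ZMod (2 * n) → ZMod 2) (j : ZMod (2 * n)) :
    fold n x (castHalf n j) = x j + x (j + n) := by
  have hnn : (n : ZMod (2 * n)) + n = 0 := by
    rw [← Nat.cast_add, ← two_mul, ZMod.natCast_self]
  simp only [fold, LinearMap.add_apply, Pi.add_apply, LinearMap.funLeft_apply]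
  rcases eq_val_castHalf_or_eq_add n j with h | h
  · conv_rhs => rw [h]
  · conv_rhs => rw [h, add_assoc, hnn, add_zero, add_comm]

theorem semiconj_fold_cshift : Function.Semiconj (fold n) cshift cshift := by
  intro x
  funext i
  obtain ⟨j, rfl⟩ := ZMod.castHom_surjective (dvd_mul_left n 2) i
  rw [cshift, ← map_one (castHalf n), ← map_sub, fold_apply_castHalf, fold_apply_castHalf]
  simp only [cshift, add_sub_right_comm]

theorem fold_comp_periodicExt : fold n ∘ₗ periodicExt n = 0 := by
  refine LinearMap.ext fun y => funext fun i => ?_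
  obtain ⟨j, rfl⟩ := ZMod.castHom_surjective (dvd_mul_left n 2) i
  rw [LinearMap.comp_apply, fold_apply_castHalf]
  simp only [LinearMap.funLeft_apply, map_add, map_natCast, ZMod.natCast_self, add_zero,
    CharTwo.add_self_eq_zero, LinearMap.zero_apply, Pi.zero_apply]

theorem fold_surjective : Function.Surjective (fold n) := by
  intro y
  refine ⟨fun j => if j.val < n then y (castHalf n j) else 0, funext fun i => ?_⟩
  have hi := ZMod.val_lt i
  have hval : ((i.val : ZMod (2 * n))).val = i.val := ZMod.val_cast_of_lt (by omega)
  have hval' : ((i.val : ZMod (2 * n)) + n).val = i.val + n := by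
    rw [← Nat.cast_add]; exact ZMod.val_cast_of_lt (by omega)
  simp only [fold, LinearMap.add_apply, Pi.add_apply, LinearMap.funLeft_apply, hval, hval',
    if_pos hi, if_neg (Nat.not_lt.mpr (Nat.le_add_left n i.val)), castHalf_val_cast, add_zero]

end Fold

/-- For all `n ∈ ℕ`, `h₂(2n) ≤ 2·h₂(n)`. -/
theorem h2_two_mul_le (n : ℕ) :
    h2 (2 * n) ≤ 2 * h2 n := by
  rcases n.eq_zero_or_pos with rfl | hn
  · rw [mul_zero]; omega
  have : NeZero n := ⟨hn.ne'⟩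
  refine csSup_le' ?_
  rintro _ ⟨U, hU, rfl⟩
  have hV := (hU.comap (semiconj_periodicExt_cshift n)).codim_le_h2
  have hW := (hU.map (semiconj_fold_cshift n) (fold_surjective n)).codim_le_h2
  have hdim := finrank_comap_add_finrank_map_le (periodicExt_injective n)
    (fold_comp_periodicExt n) U
  have hU_le := Submodule.finrank_le U
  rw [finrank_zmod_fun] at hV hW hU_le ⊢
  omega
end

section
/- For every i ∈ ℕ, h_2(2^i) = 0; in other words, the only cyclically covering subspace of 𝔽_2^{2^i} is 𝔽_2^{2^i} itself. -/
/-!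
Let `S` be the cyclic shift of `Kⁿ`, where `n = pⁱ` and `K` has characteristic `p`. Since
`Sⁿ = 1`, Frobenius gives `(S - 1)ⁿ = Sⁿ - 1 = 0`, so every nonzero `S`-invariant subspace contains
a nonzero `S`-fixed vector, i.e. a nonzero constant vector, and hence the all-ones vector `1`.
If `U` is a proper subspace, pick `f ≠ 0` vanishing on `U`. The map `x ↦ (k ↦ f (x (· + k)))`
commutes with `S` and is nonzero, so `1` lies in its range: some `x` has `f (Sᵏ x) = 1` for all
`k`, and no shift of `x` lies in `U`.
-/

open LinearMap (funLeft)

theorem Submodule.exists_mem_ne_zero_apply_eq_zero_of_pow_eq_zero {R M : Type*} [Semiring R]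
    [AddCommMonoid M] [Module R M] (W : Submodule R M) {N : Module.End R M} {m : ℕ}
    (hN : N ^ m = 0) (hW : W ≠ ⊥) (hNW : ∀ w ∈ W, N w ∈ W) : ∃ w ∈ W, w ≠ 0 ∧ N w = 0 := by
  obtain ⟨w, hwW, hw0⟩ := W.exists_mem_ne_zero_of_ne_bot hW
  have hNmw : (N ^ m) w = 0 := by rw [hN, LinearMap.zero_apply]
  clear hN
  induction m generalizing w with
  | zero => exact absurd hNmw hw0
  | succ m ih =>
    by_cases hNw : N w = 0
    · exact ⟨w, hwW, hw0, hNw⟩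
    · exact ih (N w) (hNW w hwW) hNw (by rwa [pow_succ, Module.End.mul_apply] at hNmw)

section CyclicShift

variable (R : Type*) [CommRing R] (n : ℕ)

def cyclicShift : Module.End R (ZMod n → R) := funLeft R R (· - 1)

variable {R n}

theorem cyclicShift_pow_apply (k : ℕ) (x : ZMod n → R) :
    (cyclicShift R n ^ k) x = fun t => x (t - k) := by
  induction k with
  | zero => simp
  | succ k ih =>
    funext t
    rw [pow_succ', Module.End.mul_apply, ih]
    simp [cyclicShift, LinearMap.funLeft, sub_sub, add_comm]

theorem cyclicShift_pow_self : cyclicShift R n ^ n = 1 := by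
  ext x t
  simp [cyclicShift_pow_apply]

theorem apply_eq_apply_zero_of_cyclicShift_eq [NeZero n] {x : ZMod n → R}
    (hx : cyclicShift R n x = x) (t : ZMod n) : x t = x 0 := by
  have hfix : (cyclicShift R n ^ t.val) x = x := by
    rw [Module.End.pow_apply]; exact Function.iterate_fixed hx _
  simpa [cyclicShift_pow_apply] using (congrFun hfix t).symm

end CyclicShift

section Translates

variable {R : Type*} [CommRing R] {n : ℕ}

def evalTranslates (f : (ZMod n → R) →ₗ[R] R) : Module.End R (ZMod n → R) :=
  LinearMap.pi fun k => f ∘ₗ funLeft R R (· + k)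

theorem evalTranslates_apply (f : (ZMod n → R) →ₗ[R] R) (x : ZMod n → R) (k : ZMod n) :
    evalTranslates f x k = f fun t => x (t + k) :=
  rfl

theorem evalTranslates_cyclicShift (f : (ZMod n → R) →ₗ[R] R) (x : ZMod n → R) :
    evalTranslates f (cyclicShift R n x) = cyclicShift R n (evalTranslates f x) := by
  funext k
  simp [evalTranslates_apply, cyclicShift, LinearMap.funLeft, add_sub_assoc]

theorem evalTranslates_ne_zero {f : (ZMod n → R) →ₗ[R] R} (hf : f ≠ 0) : evalTranslates f ≠ 0 := by
  refine fun h => hf (LinearMap.ext fun x => ?_)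
  simpa [evalTranslates_apply] using congrFun (LinearMap.congr_fun h x) 0

end Translates

section Field

variable {K : Type*} [Field K]

theorem cyclicShift_sub_one_pow_eq_zero (p i : ℕ) [ExpChar K p] :
    (cyclicShift K (p ^ i) - 1) ^ p ^ i = 0 := by
  have : NeZero (p ^ i) := ⟨pow_ne_zero _ (expChar_pos K p).ne'⟩
  have := expChar_of_injective_algebraMap (FaithfulSMul.algebraMap_injective K
    (Module.End K (ZMod (p ^ i) → K))) p
  rw [sub_pow_expChar_pow_of_commute _ _ (Commute.one_right _), cyclicShift_pow_self, one_pow,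
    sub_self]

theorem one_mem_of_cyclicShift_mem {p i : ℕ} [ExpChar K p] {W : Submodule K (ZMod (p ^ i) → K)}
    (hW : W ≠ ⊥) (hshift : ∀ w ∈ W, cyclicShift K (p ^ i) w ∈ W) : 1 ∈ W := by
  have : NeZero (p ^ i) := ⟨pow_ne_zero _ (expChar_pos K p).ne'⟩
  obtain ⟨w, hwW, hw0, hfix⟩ := W.exists_mem_ne_zero_apply_eq_zero_of_pow_eq_zero
    (cyclicShift_sub_one_pow_eq_zero p i) hW fun w hw => W.sub_mem (hshift w hw) hw
  rw [LinearMap.sub_apply, Module.End.one_apply, sub_eq_zero] at hfix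
  have hconst := apply_eq_apply_zero_of_cyclicShift_eq hfix
  have hw0' : w 0 ≠ 0 := fun h => hw0 (funext fun t => by simp [hconst t, h])
  convert W.smul_mem (w 0)⁻¹ hwW
  funext t
  simp [hconst t, hw0']

theorem exists_forall_apply_cyclicShift_pow_eq_one {p i : ℕ} [ExpChar K p]
    {f : (ZMod (p ^ i) → K) →ₗ[K] K} (hf : f ≠ 0) :
    ∃ x, ∀ k : ℕ, f ((cyclicShift K (p ^ i) ^ k) x) = 1 := by
  obtain ⟨x, hx⟩ : 1 ∈ LinearMap.range (evalTranslates f) :=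
    one_mem_of_cyclicShift_mem (LinearMap.range_eq_bot.not.mpr (evalTranslates_ne_zero hf))
      (by rintro _ ⟨x, rfl⟩; exact ⟨_, evalTranslates_cyclicShift f x⟩)
  refine ⟨x, fun k => ?_⟩
  simpa [evalTranslates_apply, cyclicShift_pow_apply, sub_eq_add_neg] using congrFun hx (-k)

theorem Submodule.eq_top_of_forall_exists_cyclicShift_pow_mem {p i : ℕ} [ExpChar K p]
    (U : Submodule K (ZMod (p ^ i) → K)) (hU : ∀ x, ∃ k : ℕ, (cyclicShift K (p ^ i) ^ k) x ∈ U) :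
    U = ⊤ := by
  by_contra hne
  obtain ⟨f, hf0, hUf⟩ := U.exists_le_ker_of_lt_top (lt_top_iff_ne_top.mpr hne)
  obtain ⟨x, hx⟩ := exists_forall_apply_cyclicShift_pow_eq_one hf0
  obtain ⟨k, hk⟩ := hU x
  exact one_ne_zero ((hx k).symm.trans (hUf hk))

end Field

theorem coe_cyclicShift_zmodTwo (n : ℕ) : ⇑(cyclicShift (ZMod 2) n) = cshift :=
  rfl

theorem CyclicallyCovering.eq_top_of_pow_two {i : ℕ}
    {U : Submodule (ZMod 2) (ZMod (2 ^ i) → ZMod 2)} (hU : CyclicallyCovering U) : U = ⊤ :=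
  U.eq_top_of_forall_exists_cyclicShift_pow_mem fun x => by
    obtain ⟨k, hk⟩ := hU x
    exact ⟨k, by rwa [Module.End.pow_apply, coe_cyclicShift_zmodTwo]⟩

theorem h2_eq_zero_of_forall_eq_top {n : ℕ}
    (h : ∀ U : Submodule (ZMod 2) (ZMod n → ZMod 2), CyclicallyCovering U → U = ⊤) :
    h2 n = 0 := by
  refine Nat.eq_zero_of_le_zero (csSup_le' ?_)
  rintro _ ⟨U, hU, rfl⟩
  rw [h U hU, finrank_top, Nat.sub_self]

/-- For every `i ∈ ℕ`, `h₂(2ⁱ) = 0`; in other words, the only cyclically covering subspace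
of `𝔽₂^(2ⁱ)` is the whole space. -/
theorem h2_pow_two_eq_zero (i : ℕ) :
    h2 (2 ^ i) = 0 ∧
      ∀ U : Submodule (ZMod 2) (ZMod (2 ^ i) → ZMod 2), CyclicallyCovering U → U = ⊤ :=
  ⟨h2_eq_zero_of_forall_eq_top fun _ => CyclicallyCovering.eq_top_of_pow_two,
    fun _ => CyclicallyCovering.eq_top_of_pow_two⟩
end

section
/- Let n be an odd positive integer. A vector v ∈ 𝔽_2^n works if and only if the sum of its coordinates over 𝔽_2 equals 0. -/
/-- The standard dot product over `𝔽₂`. -/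
def dot {n : ℕ} [NeZero n] (v x : ZMod n → ZMod 2) : ZMod 2 := ∑ i, v i * x i

/-- A vector `v ∈ 𝔽₂ⁿ` works if for every `x` some cyclic shift of `x` is orthogonal to `v`. -/
def Works {n : ℕ} [NeZero n] (v : ZMod n → ZMod 2) : Prop :=
  ∀ x : ZMod n → ZMod 2, ∃ k : ℕ, dot v (cshift^[k] x) = 0

theorem ZMod.exists_eq_zero_of_sum_eq_zero_of_odd_card {ι : Type*} [Fintype ι]
    (hodd : Odd (Fintype.card ι)) (f : ι → ZMod 2) (hf : ∑ i, f i = 0) : ∃ i, f i = 0 := by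
  by_contra! hne
  have hone : ∀ i, f i = 1 := fun i => Fin.eq_one_of_ne_zero _ (hne i)
  simp only [hone, Finset.sum_const, Finset.card_univ, nsmul_one,
    ZMod.natCast_eq_one_iff_odd.mpr hodd] at hf
  exact one_ne_zero hf

theorem cshift_const {n : ℕ} (a : ZMod 2) : cshift (fun _ : ZMod n => a) = fun _ => a := rfl

theorem cshift_iterate_apply {n : ℕ} (x : ZMod n → ZMod 2) (k : ℕ) (i : ZMod n) :
    (cshift^[k] x) i = x (i - k) := by
  induction k generalizing i with
  | zero => simp
  | succ k ih =>
    rw [Function.iterate_succ_apply', cshift, ih, Nat.cast_succ, sub_sub, add_comm]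

theorem dot_const_one {n : ℕ} [NeZero n] (v : ZMod n → ZMod 2) :
    dot v (fun _ => 1) = ∑ i, v i := by
  simp only [dot, mul_one]

theorem sum_dot_cshift_iterate {n : ℕ} [NeZero n] (v x : ZMod n → ZMod 2) :
    ∑ j : ZMod n, dot v (cshift^[j.val] x) = (∑ i, v i) * ∑ i, x i := by
  calc ∑ j : ZMod n, dot v (cshift^[j.val] x)
      = ∑ i, ∑ j : ZMod n, v i * x (i - j) := by
        simp only [dot, cshift_iterate_apply, ZMod.natCast_zmod_val]
        exact Finset.sum_comm
    _ = ∑ i, v i * ∑ j, x j := by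
        refine Finset.sum_congr rfl fun i _ => ?_
        rw [← Finset.mul_sum]
        exact congrArg (v i * ·) ((Equiv.subLeft i).sum_comp x)
    _ = (∑ i, v i) * ∑ i, x i := (Finset.sum_mul ..).symm

theorem sum_eq_zero_of_works {n : ℕ} [NeZero n] {v : ZMod n → ZMod 2} (hv : Works v) :
    ∑ i, v i = 0 := by
  obtain ⟨k, hk⟩ := hv fun _ => 1
  rwa [Function.iterate_fixed (cshift_const 1), dot_const_one] at hk

theorem works_of_sum_eq_zero {n : ℕ} [NeZero n] (hn : Odd n) {v : ZMod n → ZMod 2}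
    (hv : ∑ i, v i = 0) : Works v := by
  intro x
  have htotal : ∑ j : ZMod n, dot v (cshift^[j.val] x) = 0 := by
    rw [sum_dot_cshift_iterate, hv, zero_mul]
  obtain ⟨j, hj⟩ := ZMod.exists_eq_zero_of_sum_eq_zero_of_odd_card (by rwa [ZMod.card]) _ htotal
  exact ⟨j.val, hj⟩

/-- For `n` odd, a vector `v ∈ 𝔽₂ⁿ` works iff the sum of its coordinates over `𝔽₂` is `0`. -/
theorem works_iff_sum_eq_zero (n : ℕ) [NeZero n] (hn : Odd n) (v : ZMod n → ZMod 2) :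
    Works v ↔ ∑ i, v i = 0 :=
  ⟨sum_eq_zero_of_works, works_of_sum_eq_zero hn⟩
end

section
/- Let p > 3 be a prime and let v ∈ 𝔽_2^p be a nonzero symmetric vector with v ≠ ê. If w ∈ 𝔽_2^p is any vector such that ê, v and w work together, then w lies in the linear span of ê and v. -/
/-- Three vectors `u, v, w ∈ 𝔽₂ⁿ` work together if for every `x` there is a single cyclic
shift of `x` orthogonal to all three. -/
def WorkTogether3 {n : ℕ} [NeZero n] (u v w : ZMod n → ZMod 2) : Prop :=
  ∀ x : ZMod n → ZMod 2, ∃ k : ℕ,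
    dot u (cshift^[k] x) = 0 ∧ dot v (cshift^[k] x) = 0 ∧ dot w (cshift^[k] x) = 0

/-- The vector `ê ∈ 𝔽₂ⁿ` with `ê 0 = 0` and `ê i = 1` for `i ≠ 0`. -/
def ehat (n : ℕ) : ZMod n → ZMod 2 := fun i => if i = 0 then 0 else 1

/-!
Testing against the shifts of the indicator of `{0}` gives `v 0 = w 0 = 0`, and against those of
the indicator of `{0, s, t}` gives `w s = w t` whenever `v s = v t ≠ v (s - t)` (using that `v` is
symmetric). If `w` took two values on a class `Z = {i ≠ 0 | v i = c}`, splitting `Z = B ∪ C` by the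
value of `w` would give a symmetric set `Z ∌ 0` with `B - C ⊆ Z`, and `Z ≠ 𝔽ₚ \ {0}` since
`v ≠ 0, ê`. In a group of prime order this is impossible: if `Z ∪ {0}` is closed under addition
it is a nontrivial subgroup; otherwise some `d ∉ Z` is a difference of two elements of `Z`, every
progression of step `d` in `Z` is monochromatic, and translating a longest one lying in `B` by
`-c` for `c ∈ C` keeps it in `B`, until it reaches `0`. So `w` is a function of `v` off `0`, that
is `w = a • ê + b • v`.
-/

open Finset

section Combinatorics

variable {G : Type*} [AddCommGroup G]

def ContainsAP (S : Set G) (x d : G) (ℓ : ℕ) : Prop :=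
  ∀ j < ℓ, x + j • d ∈ S

namespace ContainsAP

variable {S T : Set G} {x d : G} {ℓ : ℕ}

theorem of_step (h : ContainsAP T x d ℓ) (hx : x ∈ S)
    (hstep : ∀ y ∈ S, y + d ∈ T → y + d ∈ S) : ContainsAP S x d ℓ := by
  intro j hj
  induction j with
  | zero => simpa using hx
  | succ j ih =>
    have hT := h (j + 1) hj
    rw [succ_nsmul, ← add_assoc] at hT ⊢
    exact hstep _ (ih (by omega)) hT

theorem exists_maximal {n : ℕ} (h : ContainsAP S x d ℓ) (hn : ∀ y, ¬ContainsAP S y d (ℓ + n)) :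
    ∃ m ≥ ℓ, ∃ y, ContainsAP S y d m ∧ ∀ z, ¬ContainsAP S z d (m + 1) := by
  induction n generalizing ℓ x with
  | zero => exact absurd h (hn x)
  | succ n ih =>
    by_cases hmax : ∀ z, ¬ContainsAP S z d (ℓ + 1)
    · exact ⟨ℓ, le_rfl, x, h, hmax⟩
    · obtain ⟨z, hz⟩ := not_forall_not.1 hmax
      obtain ⟨m, hm, hmax⟩ := ih hz (by simpa only [add_right_comm, add_assoc] using hn)
      exact ⟨m, by omega, hmax⟩

end ContainsAP

structure CrossDiffClosed (B C : Set G) : Prop where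
  zero_notMem : (0 : G) ∉ B ∪ C
  neg_mem : ∀ z ∈ B ∪ C, -z ∈ B ∪ C
  sub_mem : ∀ b ∈ B, ∀ c ∈ C, b - c ∈ B ∪ C

namespace CrossDiffClosed

variable {B C : Set G} {x y c d : G} {ℓ : ℕ}

theorem symm (h : CrossDiffClosed B C) : CrossDiffClosed C B where
  zero_notMem := Set.union_comm B C ▸ h.zero_notMem
  neg_mem := Set.union_comm B C ▸ h.neg_mem
  sub_mem c hc b hb := by
    rw [Set.union_comm, ← neg_sub]
    exact h.neg_mem _ (h.sub_mem b hb c hc)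

theorem add_mem_left (h : CrossDiffClosed B C) (hd : d ∉ B ∪ C) (hy : y ∈ B)
    (hyd : y + d ∈ B ∪ C) : y + d ∈ B := by
  refine hyd.resolve_right fun hC => hd ?_
  simpa using h.neg_mem _ (h.sub_mem y hy _ hC)

theorem containsAP_left (h : CrossDiffClosed B C) (hd : d ∉ B ∪ C)
    (hap : ContainsAP (B ∪ C) x d ℓ) (hx : x ∈ B) : ContainsAP B x d ℓ :=
  hap.of_step hx fun _ hy hyd => h.add_mem_left hd hy hyd

theorem containsAP_sub (h : CrossDiffClosed B C) (hap : ContainsAP B x d ℓ) (hc : c ∈ C) :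
    ContainsAP (B ∪ C) (x - c) d ℓ := fun j hj => by
  rw [sub_add_eq_add_sub]
  exact h.sub_mem _ (hap j hj) c hc

theorem containsAP_succ_of_pair (h : CrossDiffClosed B C) (hap : ContainsAP B x d ℓ) (hℓ : 0 < ℓ)
    (hy : y ∈ C) (hyd : y + d ∈ C) : ContainsAP (B ∪ C) (x - (y + d)) d (ℓ + 1)
  | 0, _ => by simpa using h.sub_mem x (by simpa using hap 0 hℓ) _ hyd
  | j + 1, hj => by
    rw [show x - (y + d) + (j + 1) • d = x + j • d - y by rw [succ_nsmul]; abel]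
    exact h.sub_mem _ (hap j (by omega)) y hy

/-- A translate of a longest progression lies in `B ∪ C`, hence is monochromatic, and it cannot lie
in `C`: two consecutive points of `C` would extend it by `containsAP_succ_of_pair`. -/
theorem containsAP_sub_nsmul (h : CrossDiffClosed B C) (hd : d ∉ B ∪ C) (hℓ : 2 ≤ ℓ)
    (hmax : ∀ z, ¬ContainsAP (B ∪ C) z d (ℓ + 1)) (hap : ContainsAP B x d ℓ) (hc : c ∈ C)
    (k : ℕ) : ContainsAP B (x - k • c) d ℓ := by
  induction k with
  | zero => simpa using hap
  | succ k ih =>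
    have hZ := h.containsAP_sub ih hc
    rw [succ_nsmul, ← sub_sub]
    rcases hZ 0 (by omega) with hB | hC
    · exact h.containsAP_left hd hZ (by simpa using hB)
    · have hCap := h.symm.containsAP_left (Set.union_comm B C ▸ hd) (Set.union_comm B C ▸ hZ)
        (by simpa using hC)
      exact (hmax _ (h.containsAP_succ_of_pair ih (by omega) (by simpa using hCap 0 (by omega))
        (by simpa using hCap 1 (by omega)))).elim

end CrossDiffClosed

end Combinatorics

section PrimeOrder

variable {G : Type*} [AddCommGroup G] [Fact (Nat.card G).Prime]

theorem not_containsAP_natCard {S : Set G} (h0 : (0 : G) ∉ S) {d : G} (hd : d ≠ 0) (x : G) :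
    ¬ContainsAP S x d (Nat.card G) := fun hap => by
  obtain ⟨k, hk⟩ := (AddSubmonoid.mem_multiples_iff _ _).1
    (mem_multiples_of_prime_card rfl hd (g' := -x))
  have := hap (k % Nat.card G) (Nat.mod_lt _ (Fact.out : (Nat.card G).Prime).pos)
  rw [mod_natCard_nsmul, hk, add_neg_cancel] at this
  exact h0 this

theorem mem_of_add_mem_of_ne_zero {Z : Set G} (hadd : ∀ a ∈ Z, ∀ b ∈ Z, a + b ≠ 0 → a + b ∈ Z)
    {z n : G} (hz : z ∈ Z) (hz0 : z ≠ 0) (hn : n ≠ 0) : n ∈ Z := by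
  let M : AddSubmonoid G :=
    { carrier := insert 0 Z
      zero_mem' := Set.mem_insert _ _
      add_mem' := by
        rintro a b (rfl | ha) (rfl | hb)
        · simp
        · simpa using Or.inr hb
        · simpa using Or.inr ha
        · by_cases hab : a + b = 0
          · exact Or.inl hab
          · exact Or.inr (hadd a ha b hb hab) }
  have hnM : n ∈ M := AddSubmonoid.multiples_le.2 (Set.mem_insert_of_mem 0 hz)
    (mem_multiples_of_prime_card rfl hz0)
  exact hnM.resolve_left hn

namespace CrossDiffClosed

variable {B C : Set G} {x d : G} {ℓ : ℕ}

theorem false_of_maximal (h : CrossDiffClosed B C) (hC : C.Nonempty) (hd : d ∉ B ∪ C)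
    (hℓ : 2 ≤ ℓ) (hmax : ∀ z, ¬ContainsAP (B ∪ C) z d (ℓ + 1))
    (hap : ContainsAP (B ∪ C) x d ℓ) (hx : x ∈ B) : False := by
  obtain ⟨c, hc⟩ := hC
  have hc0 : c ≠ 0 := fun hc0 => h.zero_notMem (.inr (hc0 ▸ hc))
  obtain ⟨k, hk⟩ := (AddSubmonoid.mem_multiples_iff _ _).1
    (mem_multiples_of_prime_card rfl hc0 (g' := x))
  have := h.containsAP_sub_nsmul hd hℓ hmax (h.containsAP_left hd hap hx) hc k 0 (by omega)
  rw [hk, sub_self, zero_smul, add_zero] at this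
  exact h.zero_notMem (.inl this)

theorem false_of_add_mem (h : CrossDiffClosed B C) (hB : B.Nonempty) (hC : C.Nonempty)
    {z : G} (hz : z ∈ B ∪ C) (hzd : z + d ∈ B ∪ C) (hd0 : d ≠ 0) (hd : d ∉ B ∪ C) : False := by
  have hpair : ContainsAP (B ∪ C) z d 2
    | 0, _ => by simpa using hz
    | 1, _ => by simpa using hzd
  have hcard : 2 ≤ Nat.card G := (Fact.out : (Nat.card G).Prime).two_le
  obtain ⟨ℓ, hℓ, x, hap, hmax⟩ := hpair.exists_maximal (n := Nat.card G - 2)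
    (by simpa [Nat.add_sub_cancel' hcard] using not_containsAP_natCard h.zero_notMem hd0)
  rcases hap 0 (by omega) with hx | hx
  · exact h.false_of_maximal hC hd hℓ hmax hap (by simpa using hx)
  · rw [Set.union_comm] at hd hmax hap
    exact h.symm.false_of_maximal hB hd hℓ hmax hap (by simpa using hx)

theorem mem_of_ne_zero (h : CrossDiffClosed B C) (hB : B.Nonempty) (hC : C.Nonempty) {n : G}
    (hn : n ≠ 0) : n ∈ B ∪ C := by
  obtain ⟨b, hb⟩ := hB
  refine mem_of_add_mem_of_ne_zero (fun a ha e he hae => ?_) (.inl hb)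
    (fun hb0 => h.zero_notMem (.inl (hb0 ▸ hb))) hn
  by_contra hnot
  exact h.false_of_add_mem ⟨b, hb⟩ hC (h.neg_mem e he) (by rwa [add_comm a, neg_add_cancel_left])
    hae hnot

end CrossDiffClosed

end PrimeOrder

theorem zmod_two_eq_zero_or_eq_one (a : ZMod 2) : a = 0 ∨ a = 1 := by
  revert a
  decide

section Shift

variable {n : ℕ}

theorem iterate_cshift_apply (x : ZMod n → ZMod 2) (k : ℕ) (i : ZMod n) :
    cshift^[k] x i = x (i - k) := by
  induction k generalizing i with
  | zero => simp
  | succ k ih =>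
    rw [Function.iterate_succ_apply', cshift, ih, Nat.cast_succ, sub_sub, add_comm (1 : ZMod n)]

theorem ehat_eq_zero_iff {i : ZMod n} : ehat n i = 0 ↔ i = 0 := by
  by_cases hi : i = 0 <;> simp [ehat, hi]

theorem exists_ne_zero_apply_eq {v : ZMod n → ZMod 2} (hv00 : v 0 = 0) (hv0 : v ≠ 0)
    (hve : v ≠ ehat n) (x : ZMod 2) : ∃ i ≠ 0, v i = x := by
  by_contra! hx
  obtain rfl | rfl := zmod_two_eq_zero_or_eq_one x
  · refine hve (funext fun i => ?_)
    by_cases hi : i = 0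
    · simp [ehat, hi, hv00]
    · simpa [ehat, hi] using (zmod_two_eq_zero_or_eq_one (v i)).resolve_left (hx i hi)
  · refine hv0 (funext fun i => ?_)
    by_cases hi : i = 0
    · simp [hi, hv00]
    · simpa using (zmod_two_eq_zero_or_eq_one (v i)).resolve_right (hx i hi)

variable [NeZero n]

theorem dot_iterate_cshift_indicator (u : ZMod n → ZMod 2) (S : Finset (ZMod n)) (k : ℕ) :
    dot u (cshift^[k] fun j => if j ∈ S then 1 else 0) = ∑ s ∈ S, u (s + k) := by
  rw [dot, ← Equiv.sum_comp (Equiv.addRight (k : ZMod n))]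
  simp [iterate_cshift_apply, Finset.sum_ite_mem]

theorem WorkTogether3.exists_sum_eq_zero {u v w : ZMod n → ZMod 2} (h : WorkTogether3 u v w)
    (S : Finset (ZMod n)) : ∃ k : ZMod n,
      ∑ s ∈ S, u (s + k) = 0 ∧ ∑ s ∈ S, v (s + k) = 0 ∧ ∑ s ∈ S, w (s + k) = 0 := by
  obtain ⟨k, hu, hv, hw⟩ := h fun j => if j ∈ S then 1 else 0
  rw [dot_iterate_cshift_indicator] at hu hv hw
  exact ⟨k, hu, hv, hw⟩

end Shift

namespace WorkTogether3

variable {n : ℕ} [NeZero n] {v w : ZMod n → ZMod 2}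

theorem apply_zero_eq_zero (h : WorkTogether3 (ehat n) v w) : v 0 = 0 ∧ w 0 = 0 := by
  obtain ⟨k, he, hv, hw⟩ := h.exists_sum_eq_zero {0}
  simp only [sum_singleton, zero_add, ehat_eq_zero_iff] at he hv hw
  subst he
  exact ⟨hv, hw⟩

theorem eq_of_apply_sub_ne (h : WorkTogether3 (ehat n) v w) (hsym : ∀ i, v i = v (-i))
    {s t : ZMod n} (hs : s ≠ 0) (ht : t ≠ 0) (hst : s ≠ t) (hv : v s = v t)
    (hvst : v (s - t) ≠ v s) : w s = w t := by
  obtain ⟨hv0, hw0⟩ := h.apply_zero_eq_zero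
  obtain ⟨k, he, hvk, hwk⟩ := h.exists_sum_eq_zero {0, s, t}
  rw [sum_insert (by simp [hs.symm, ht.symm]), sum_insert (by simpa), sum_singleton, zero_add]
    at he hvk hwk
  -- otherwise `he` reads `1 + 1 + 1 = 0`
  have hk : k = 0 ∨ s + k = 0 ∨ t + k = 0 := by
    by_contra! hk
    simp only [ehat, hk, if_false] at he
    exact absurd he (by decide)
  rcases hk with rfl | hk | hk
  · simpa [hw0, CharTwo.add_eq_zero] using hwk
  · rw [eq_neg_of_add_eq_zero_right hk, ← hsym, add_neg_cancel, hv0, zero_add,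
      show t + -s = -(s - t) by abel, ← hsym, CharTwo.add_eq_zero] at hvk
    exact absurd hvk.symm hvst
  · rw [eq_neg_of_add_eq_zero_right hk, ← hsym, add_neg_cancel, hv0, add_zero, ← sub_eq_add_neg,
      CharTwo.add_eq_zero, ← hv] at hvk
    exact absurd hvk.symm hvst

theorem crossDiffClosed (h : WorkTogether3 (ehat n) v w) (hsym : ∀ i, v i = v (-i)) (s : ZMod n) :
    CrossDiffClosed {i | i ≠ 0 ∧ v i = v s ∧ w i = w s} {i | i ≠ 0 ∧ v i = v s ∧ w i ≠ w s} := by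
  have hmem (i : ZMod n) : i ∈ {i | i ≠ 0 ∧ v i = v s ∧ w i = w s} ∪
      {i | i ≠ 0 ∧ v i = v s ∧ w i ≠ w s} ↔ i ≠ 0 ∧ v i = v s := by
    simp only [Set.mem_union, Set.mem_ofPred_eq]
    tauto
  refine ⟨by simp [hmem], fun i hi => ?_, fun b hb c hc => ?_⟩ <;> simp only [hmem] at *
  · exact ⟨neg_ne_zero.2 hi.1, by rw [← hsym]; exact hi.2⟩
  · obtain ⟨hb0, hbv, hbw⟩ := hb
    obtain ⟨hc0, hcv, hcw⟩ := hc
    have hbc : b ≠ c := by rintro rfl; exact hcw hbw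
    refine ⟨sub_ne_zero.2 hbc, by_contra fun hv => hcw ?_⟩
    rw [← hbw]
    exact (h.eq_of_apply_sub_ne hsym hb0 hc0 hbc (hbv.trans hcv.symm) (hbv ▸ hv)).symm

theorem eq_of_apply_eq {p : ℕ} [NeZero p] (hp : p.Prime) {v w : ZMod p → ZMod 2}
    (h : WorkTogether3 (ehat p) v w) (hsym : ∀ i, v i = v (-i)) (hv0 : v ≠ 0)
    (hve : v ≠ ehat p) {s t : ZMod p} (hs : s ≠ 0) (ht : t ≠ 0) (hvst : v s = v t) :
    w s = w t := by
  have : Fact (Nat.card (ZMod p)).Prime := ⟨by rwa [Nat.card_zmod]⟩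
  by_contra hw
  obtain ⟨i, hi, hvi⟩ := exists_ne_zero_apply_eq h.apply_zero_eq_zero.1 hv0 hve (v s + 1)
  have := (h.crossDiffClosed hsym s).mem_of_ne_zero ⟨s, hs, rfl, rfl⟩
    ⟨t, ht, hvst.symm, Ne.symm hw⟩ hi
  simp [hvi] at this

end WorkTogether3

theorem mem_span_ehat_of_forall_ne_zero {n : ℕ} {v w : ZMod n → ZMod 2} (hv : v 0 = 0)
    (hw : w 0 = 0) (f : ZMod 2 → ZMod 2) (hf : ∀ i ≠ 0, w i = f (v i)) :
    w ∈ Submodule.span (ZMod 2) ({ehat n, v} : Set (ZMod n → ZMod 2)) := by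
  refine Submodule.mem_span_pair.2 ⟨f 0, f 0 + f 1, funext fun i => ?_⟩
  by_cases hi : i = 0
  · simp [hi, hv, hw, ehat]
  · simp only [Pi.add_apply, Pi.smul_apply, smul_eq_mul, ehat, if_neg hi, mul_one, hf i hi]
    obtain h | h := zmod_two_eq_zero_or_eq_one (v i) <;> rw [h]
    · rw [mul_zero, add_zero]
    · rw [mul_one, ← add_assoc, CharTwo.add_self_eq_zero, zero_add]

theorem mem_span_of_work_with_symmetric_general (p : ℕ) [NeZero p] (hp : p.Prime)
    (v : ZMod p → ZMod 2) (hsym : ∀ i : ZMod p, v i = v (-i))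
    (hv0 : v ≠ 0) (hve : v ≠ ehat p)
    (w : ZMod p → ZMod 2) (hwork : WorkTogether3 (ehat p) v w) :
    w ∈ Submodule.span (ZMod 2) ({ehat p, v} : Set (ZMod p → ZMod 2)) := by
  obtain ⟨hv00, hw00⟩ := hwork.apply_zero_eq_zero
  choose e he0 hev using exists_ne_zero_apply_eq hv00 hv0 hve
  refine mem_span_ehat_of_forall_ne_zero hv00 hw00 (w ∘ e) fun i hi => ?_
  exact hwork.eq_of_apply_eq hp hsym hv0 hve hi (he0 _) (hev _).symm

/-- Let `p > 3` be a prime and `v ∈ 𝔽₂ᵖ` a nonzero symmetric vector with `v ≠ ê`. If `w` is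
any vector such that `ê, v, w` work together, then `w` lies in the span of `ê` and `v`. -/
theorem mem_span_of_work_with_symmetric (p : ℕ) [NeZero p] (hp : p.Prime) (hp3 : 3 < p)
    (v : ZMod p → ZMod 2) (hsym : ∀ i : ZMod p, v i = v (-i))
    (hv0 : v ≠ 0) (hve : v ≠ ehat p)
    (w : ZMod p → ZMod 2) (hwork : WorkTogether3 (ehat p) v w) :
    w ∈ Submodule.span (ZMod 2) ({ehat p, v} : Set (ZMod p → ZMod 2)) :=
  mem_span_of_work_with_symmetric_general p hp v hsym hv0 hve w hwork
end

section
/- Let q be an odd prime and let p > q be a prime such that q is a primitive root modulo p (i.e. q generates (ℤ/pℤ)^×). Then h_q(p) = 0; equivalently, no nonzero vector v ∈ 𝔽_q^p works. -/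
/-!
Let `σ` be the cyclic shift, viewed as an endomorphism so that polynomials act on `𝔽_q^p`.
If `t = b(σ) v`, then `t_k = v · σᵏ x` for all `k`, where `x` lists the coefficients of `b` in
cyclically reversed order; so `v` does not work as soon as `𝔽_q[σ] v` contains a vector with no
zero entry.

If `∑ vᵢ ≠ 0`, then `(1 + σ + ⋯ + σ^{p-1}) v` is the constant vector `∑ vᵢ`. Otherwise, writing
`v = P_v(σ) e₀`, we get `P_v = (X - 1) s` with `Φ_p ∤ s` since `v ≠ 0`. As `q` has order `p - 1`
modulo `p`, `Φ_p` is irreducible over `𝔽_q`, so Bézout for `Φ_p` and `s` shows that `𝔽_q[σ] v`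
contains every sum-zero vector, among them one with no zero entry because `q ≥ 3`.

Finally, a proper cyclically covering subspace lies in the kernel of some nonzero functional
`v · _`, and that `v` works.
-/

/-- The cyclic shift operator on `Fⁿ` (indexed by `ZMod n`): `(cshiftF x) i = x (i - 1)`. -/
def cshiftF {n : ℕ} {F : Type*} (x : ZMod n → F) : ZMod n → F := fun i => x (i - 1)

/-- A subspace `U ≤ Fⁿ` is cyclically covering if every vector of `Fⁿ` has a cyclic shift
lying in `U`, i.e. `⋃ᵢ σⁱ(U) = Fⁿ`. -/
def CyclicallyCoveringF {n : ℕ} {F : Type*} [Field F]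
    (U : Submodule F (ZMod n → F)) : Prop :=
  ∀ x : ZMod n → F, ∃ k : ℕ, cshiftF^[k] x ∈ U

/-- `hF F n` is the largest possible codimension of a cyclically covering subspace of `Fⁿ`. -/
noncomputable def hF (F : Type*) [Field F] (n : ℕ) : ℕ :=
  sSup {d : ℕ | ∃ U : Submodule F (ZMod n → F),
    CyclicallyCoveringF U ∧
    Module.finrank F (ZMod n → F) - Module.finrank F U = d}

/-- A vector `v ∈ Fⁿ` works if for every `x ∈ Fⁿ` some cyclic shift of `x` is orthogonal to
`v` with respect to the standard bilinear dot product. -/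
def WorksF {n : ℕ} [NeZero n] {F : Type*} [Field F] (v : ZMod n → F) : Prop :=
  ∀ x : ZMod n → F, ∃ k : ℕ, ∑ i, v i * (cshiftF^[k] x) i = 0

open Polynomial

theorem cshiftF_iterate_apply {n : ℕ} {F : Type*} (x : ZMod n → F) (k : ℕ) (i : ZMod n) :
    cshiftF^[k] x i = x (i - k) := by
  induction k generalizing i with
  | zero => simp
  | succ k ih =>
    rw [Function.iterate_succ_apply', cshiftF, ih, Nat.cast_succ, sub_sub, add_comm]

theorem sum_range_natCast_zmod {n : ℕ} [NeZero n] {M : Type*} [AddCommMonoid M]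
    (f : ZMod n → M) : ∑ m ∈ Finset.range n, f m = ∑ i, f i :=
  Finset.sum_nbij' (↑) ZMod.val (fun _ _ => Finset.mem_univ _)
    (fun i _ => Finset.mem_range.2 (ZMod.val_lt i))
    (fun _ hm => ZMod.val_cast_of_lt (Finset.mem_range.1 hm))
    (fun i _ => ZMod.natCast_zmod_val i) (fun _ _ => rfl)

section CyclicShift

variable (n : ℕ) (F : Type*) [CommRing F]

def cshiftLinear : Module.End F (ZMod n → F) := LinearMap.funLeft F F (· - 1)

variable {n F}

theorem cshiftLinear_pow_apply (k : ℕ) (x : ZMod n → F) (i : ZMod n) :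
    (cshiftLinear n F ^ k) x i = x (i - k) := by
  rw [Module.End.pow_apply]
  exact cshiftF_iterate_apply x k i

theorem cshiftLinear_pow_single (k : ℕ) :
    (cshiftLinear n F ^ k) (Pi.single 0 1) = Pi.single (k : ZMod n) 1 := by
  ext i
  simp only [cshiftLinear_pow_apply, Pi.single_apply, sub_eq_zero]

theorem aeval_cshiftLinear_X_pow_sub_one : aeval (cshiftLinear n F) (X ^ n - 1 : F[X]) = 0 := by
  ext x i
  simp [cshiftLinear_pow_apply]

theorem aeval_cshiftLinear_geom_sum_apply [NeZero n] (v : ZMod n → F) (j : ZMod n) :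
    aeval (cshiftLinear n F) (∑ m ∈ Finset.range n, X ^ m : F[X]) v j = ∑ i, v i := by
  simp only [map_sum, map_pow, aeval_X, LinearMap.sum_apply, Finset.sum_apply,
    cshiftLinear_pow_apply]
  rw [sum_range_natCast_zmod (fun m => v (j - m))]
  exact Equiv.sum_comp (Equiv.subLeft j) v

noncomputable def vecPoly [NeZero n] (w : ZMod n → F) : F[X] := ∑ i, C (w i) * X ^ i.val

theorem vecPoly_eval_one [NeZero n] (w : ZMod n → F) : (vecPoly w).eval 1 = ∑ i, w i := by
  simp [vecPoly, eval_finsetSum]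

theorem aeval_vecPoly_single [NeZero n] (w : ZMod n → F) :
    aeval (cshiftLinear n F) (vecPoly w) (Pi.single 0 1) = w := by
  simp only [vecPoly, map_sum, map_mul, aeval_C, aeval_X_pow, LinearMap.sum_apply,
    Module.End.mul_apply, cshiftLinear_pow_single, ZMod.natCast_zmod_val]
  simp_rw [Module.algebraMap_end_apply, ← Pi.single_smul', smul_eq_mul, mul_one]
  exact Finset.univ_sum_single w

end CyclicShift

section Correlation

variable {n : ℕ} [NeZero n] {F : Type*}

/-- `crossCorr v x k` is the dot product `v · σᵏ x` of the definition of `WorksF`. -/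
def crossCorr [CommRing F] (v : ZMod n → F) : (ZMod n → F) →ₗ[F] (ZMod n → F) where
  toFun x k := ∑ i, v i * x (i - k)
  map_add' x y := by
    ext k
    simp [mul_add, Finset.sum_add_distrib]
  map_smul' c x := by
    ext k
    simp [Finset.mul_sum, mul_left_comm]

theorem cshiftLinear_pow_mem_range_crossCorr [CommRing F] (v : ZMod n → F) (m : ℕ) :
    (cshiftLinear n F ^ m) v ∈ LinearMap.range (crossCorr v) := by
  refine ⟨Pi.single (-(m : ZMod n)) 1, funext fun k => ?_⟩
  simp [crossCorr, cshiftLinear_pow_apply, Pi.single_apply, sub_eq_iff_eq_add, neg_add_eq_sub]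

theorem aeval_cshiftLinear_mem_range_crossCorr [CommRing F] (b : F[X]) (v : ZMod n → F) :
    aeval (cshiftLinear n F) b v ∈ LinearMap.range (crossCorr v) := by
  induction b using Polynomial.induction_on' with
  | add p q hp hq => simpa only [map_add, LinearMap.add_apply] using add_mem hp hq
  | monomial k c =>
    rw [aeval_monomial, Module.End.mul_apply, Module.algebraMap_end_apply]
    exact Submodule.smul_mem _ c (cshiftLinear_pow_mem_range_crossCorr v k)

theorem not_worksF_of_aeval_apply_ne_zero [Field F] (v : ZMod n → F) (b : F[X])
    (hb : ∀ k, aeval (cshiftLinear n F) b v k ≠ 0) : ¬ WorksF v := by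
  intro hv
  obtain ⟨x, hx⟩ := aeval_cshiftLinear_mem_range_crossCorr b v
  obtain ⟨k, hk⟩ := hv x
  refine hb k (hx ▸ ?_)
  simpa [crossCorr, cshiftF_iterate_apply] using hk

end Correlation

section NoWorkingVector

variable {n : ℕ} [NeZero n] {F : Type*} [Field F]

theorem exists_aeval_cshiftLinear_eq_of_sum_eq_zero
    (hΦ : Irreducible (∑ i ∈ Finset.range n, X ^ i : F[X])) {v t : ZMod n → F} (hv : v ≠ 0)
    (hv0 : ∑ i, v i = 0) (ht0 : ∑ i, t i = 0) :
    ∃ b : F[X], aeval (cshiftLinear n F) b v = t := by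
  set Φ : F[X] := ∑ i ∈ Finset.range n, X ^ i
  have hΦX : (X ^ n - 1 : F[X]) = Φ * (X - 1) := (geom_sum_mul X n).symm
  have hX_dvd {w : ZMod n → F} (hw : ∑ i, w i = 0) : X - 1 ∣ vecPoly w := by
    simpa using dvd_iff_isRoot.2 (show (vecPoly w).IsRoot 1 by rwa [IsRoot, vecPoly_eval_one])
  obtain ⟨s, hs⟩ := hX_dvd hv0
  obtain ⟨c, hc⟩ := hX_dvd ht0
  have hΦs : ¬ Φ ∣ s := by
    rintro ⟨r, rfl⟩
    apply hv
    rw [← aeval_vecPoly_single v, hs, show (X - 1) * (Φ * r) = (X ^ n - 1) * r by rw [hΦX]; ring,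
      map_mul, aeval_cshiftLinear_X_pow_sub_one, zero_mul, LinearMap.zero_apply]
  obtain ⟨a, b, hab⟩ := hΦ.coprime_iff_not_dvd.2 hΦs
  refine ⟨b * c, ?_⟩
  calc aeval (cshiftLinear n F) (b * c) v
      = aeval (cshiftLinear n F) (b * c * vecPoly v) (Pi.single 0 1) := by
        rw [map_mul _ (b * c), Module.End.mul_apply, aeval_vecPoly_single]
    _ = aeval (cshiftLinear n F) (vecPoly t - a * c * (X ^ n - 1)) (Pi.single 0 1) := by
        congr 2
        rw [hs, hc, hΦX]
        linear_combination (X - 1) * c * hab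
    _ = t := by
        rw [map_sub, map_mul, aeval_cshiftLinear_X_pow_sub_one, mul_zero, sub_zero,
          aeval_vecPoly_single]

theorem not_worksF_of_irreducible_geom_sum
    (hΦ : Irreducible (∑ i ∈ Finset.range n, X ^ i : F[X]))
    (ht : ∃ t : ZMod n → F, (∀ i, t i ≠ 0) ∧ ∑ i, t i = 0) {v : ZMod n → F} (hv : v ≠ 0) :
    ¬ WorksF v := by
  by_cases hv0 : ∑ i, v i = 0
  · obtain ⟨t, ht_ne, ht0⟩ := ht
    obtain ⟨b, hb⟩ := exists_aeval_cshiftLinear_eq_of_sum_eq_zero hΦ hv hv0 ht0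
    exact not_worksF_of_aeval_apply_ne_zero v b (hb ▸ ht_ne)
  · exact not_worksF_of_aeval_apply_ne_zero v _ fun k => by
      rwa [aeval_cshiftLinear_geom_sum_apply]

theorem exists_forall_ne_zero_sum_eq_zero [Fintype F] (hF : 2 < Fintype.card F)
    [Nontrivial (ZMod n)] : ∃ t : ZMod n → F, (∀ i, t i ≠ 0) ∧ ∑ i, t i = 0 := by
  classical
  -- the vector `(a, 2 - n - a, 1, …, 1)`
  obtain ⟨a, -, ha⟩ := Finset.exists_mem_notMem_of_card_lt_card
    (s := {0, 2 - (n : F)}) (t := Finset.univ) (Finset.card_le_two.trans_lt hF)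
  rw [Finset.mem_insert, Finset.mem_singleton, not_or] at ha
  refine ⟨1 + Pi.single 0 (a - 1) + Pi.single 1 (1 - (n : F) - a), fun i => ?_, ?_⟩
  · rcases eq_or_ne i 0 with rfl | hi0
    · simpa using ha.1
    rcases eq_or_ne i 1 with rfl | hi1
    · simp only [Pi.add_apply, Pi.one_apply, Pi.single_eq_same, Pi.single_eq_of_ne hi0]
      exact fun h => ha.2 (by linear_combination -h)
    · simp [hi0, hi1]
  · simp [Finset.sum_add_distrib]
    ring

theorem exists_ne_zero_worksF_of_cyclicallyCovering {U : Submodule F (ZMod n → F)}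
    (hU : CyclicallyCoveringF U) (hU_ne : U ≠ ⊤) : ∃ v : ZMod n → F, v ≠ 0 ∧ WorksF v := by
  classical
  obtain ⟨φ, hφ, hφU⟩ :=
    Submodule.exists_dual_map_eq_bot_of_lt_top hU_ne.lt_top inferInstance
  set v : ZMod n → F := fun i => φ (fun j => if i = j then 1 else 0)
  have hφv (x : ZMod n → F) : φ x = ∑ i, v i * x i := by
    rw [φ.pi_apply_eq_sum_univ x]
    exact Finset.sum_congr rfl fun i _ => mul_comm _ _
  refine ⟨v, fun hv => hφ (LinearMap.ext fun x => by simp [hφv, hv]), fun x => ?_⟩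
  obtain ⟨k, hk⟩ := hU x
  refine ⟨k, ?_⟩
  rw [← hφv, ← LinearMap.mem_ker]
  exact LinearMap.le_ker_iff_map.2 hφU hk

theorem hF_eq_zero_of_forall_not_worksF (h : ∀ v : ZMod n → F, v ≠ 0 → ¬ WorksF v) :
    hF F n = 0 := by
  refine Nat.eq_zero_of_le_zero (csSup_le' ?_)
  rintro d ⟨U, hU, rfl⟩
  obtain rfl : U = ⊤ := by
    by_contra hU_ne
    obtain ⟨v, hv, hv_works⟩ := exists_ne_zero_worksF_of_cyclicallyCovering hU hU_ne
    exact h v hv hv_works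
  simp

end NoWorkingVector

theorem irreducible_cyclotomic_of_orderOf_eq {q p : ℕ} [Fact q.Prime] [Fact p.Prime]
    (hroot : orderOf (q : ZMod p) = p - 1) : Irreducible (cyclotomic p (ZMod q)) := by
  have hqp : ¬ q ∣ p := by
    intro h
    rw [(Nat.prime_dvd_prime_iff_eq Fact.out Fact.out).1 h, ZMod.natCast_self,
      orderOf_zero] at hroot
    have := (Fact.out : p.Prime).two_le
    omega
  refine ZMod.irreducible_of_dvd_cyclotomic_of_natDegree hqp dvd_rfl ?_
  rw [natDegree_cyclotomic, Nat.totient_prime Fact.out, ← hroot, ← orderOf_units,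
    ZMod.coe_unitOfCoprime]

theorem hF_eq_zero_of_primitive_root_general (q p : ℕ) [Fact q.Prime] (hq : Odd q)
    (hp : p.Prime) [NeZero p]
    (hroot : orderOf ((q : ZMod p)) = p - 1) :
    hF (ZMod q) p = 0 ∧ ∀ v : ZMod p → ZMod q, v ≠ 0 → ¬ WorksF v := by
  have := Fact.mk hp
  have hΦ : Irreducible (∑ i ∈ Finset.range p, X ^ i : (ZMod q)[X]) := by
    rw [← cyclotomic_prime]
    exact irreducible_cyclotomic_of_orderOf_eq hroot
  have hq3 : 2 < Fintype.card (ZMod q) := by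
    rw [ZMod.card]
    refine (Fact.out : q.Prime).two_le.lt_of_ne' ?_
    rintro rfl
    exact Nat.not_odd_iff_even.2 even_two hq
  have h : ∀ v : ZMod p → ZMod q, v ≠ 0 → ¬ WorksF v := fun _ =>
    not_worksF_of_irreducible_geom_sum hΦ (exists_forall_ne_zero_sum_eq_zero hq3)
  exact ⟨hF_eq_zero_of_forall_not_worksF h, h⟩

/-- Let `q` be an odd prime and `p > q` a prime such that `q` is a primitive root modulo
`p`. Then `h_q(p) = 0`; equivalently, no nonzero vector `v ∈ 𝔽_qᵖ` works. -/
theorem hF_eq_zero_of_primitive_root (q p : ℕ) [Fact q.Prime] (hq : Odd q)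
    (hp : p.Prime) [NeZero p] (hqp : q < p)
    (hroot : orderOf ((q : ZMod p)) = p - 1) :
    hF (ZMod q) p = 0 ∧ ∀ v : ZMod p → ZMod q, v ≠ 0 → ¬ WorksF v :=
  hF_eq_zero_of_primitive_root_general q p hq hp hroot
end
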